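/- arXiv:1610.04659 — 6 statements merged into one kernel-verified Lean document; each statement's English description precedes it below -/
import Mathlib

section
/- Let u, v be complex numbers of modulus 1 and let z be a complex number with |z| < 1. Set x = u² and y = v². Then the series ∑_{k=0}^∞ z^k (u^{2k+1} − u^{−(2k+1)})(v^{2k+1} − v^{−(2k+1)}) converges and equals (u − u^{−1})(v − v^{−1})(1 − z)[ (1+z)² + z(x + x^{−1} + y + y^{−1}) ] / [ (1 − z x y)(1 − z x^{−1} y)(1 − z x y^{−1})(1 − z x^{−1} y^{−1}) ]. -/
/-!
Writing `u ^ (±(2k+1)) = u^{±1} (u²)^{±k}`, the `k`-th summand is a signed combination of the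
`k`-th terms of four geometric series with ratios `z x^{±1} y^{±1}`, each of norm `‖z‖ < 1`.
Summing them and clearing denominators gives the closed form.
-/

variable {K : Type*}

theorem zpow_two_mul_add_one_eq [DivisionCommMonoid K] (w : K) (k : ℕ) :
    w ^ (2 * (k : ℤ) + 1) = w * (w ^ 2) ^ k := by
  rw [show 2 * (k : ℤ) + 1 = ((2 * k + 1 : ℕ) : ℤ) by push_cast; ring, zpow_natCast,
    pow_succ, pow_mul, mul_comm]

theorem zpow_neg_two_mul_add_one_eq [DivisionCommMonoid K] (w : K) (k : ℕ) :
    w ^ (-(2 * (k : ℤ) + 1)) = w⁻¹ * (w ^ 2)⁻¹ ^ k := by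
  rw [zpow_neg, zpow_two_mul_add_one_eq, mul_inv, inv_pow]

section Field

variable [Field K] (u v z : K)

theorem pow_mul_sub_zpow_mul_sub_zpow_eq (k : ℕ) :
    z ^ k * (u ^ (2 * (k : ℤ) + 1) - u ^ (-(2 * (k : ℤ) + 1))) *
        (v ^ (2 * (k : ℤ) + 1) - v ^ (-(2 * (k : ℤ) + 1))) =
      u * v * (z * u ^ 2 * v ^ 2) ^ k - u⁻¹ * v * (z * (u ^ 2)⁻¹ * v ^ 2) ^ k -
        u * v⁻¹ * (z * u ^ 2 * (v ^ 2)⁻¹) ^ k + u⁻¹ * v⁻¹ * (z * (u ^ 2)⁻¹ * (v ^ 2)⁻¹) ^ k := by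
  simp only [zpow_two_mul_add_one_eq, zpow_neg_two_mul_add_one_eq]
  ring

theorem signed_geom_sum_eq {u v} (hu : u ≠ 0) (hv : v ≠ 0)
    (h₁ : 1 - z * u ^ 2 * v ^ 2 ≠ 0) (h₂ : 1 - z * (u ^ 2)⁻¹ * v ^ 2 ≠ 0)
    (h₃ : 1 - z * u ^ 2 * (v ^ 2)⁻¹ ≠ 0) (h₄ : 1 - z * (u ^ 2)⁻¹ * (v ^ 2)⁻¹ ≠ 0) :
    u * v * (1 - z * u ^ 2 * v ^ 2)⁻¹ - u⁻¹ * v * (1 - z * (u ^ 2)⁻¹ * v ^ 2)⁻¹ -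
        u * v⁻¹ * (1 - z * u ^ 2 * (v ^ 2)⁻¹)⁻¹ + u⁻¹ * v⁻¹ * (1 - z * (u ^ 2)⁻¹ * (v ^ 2)⁻¹)⁻¹ =
      (u - u⁻¹) * (v - v⁻¹) * (1 - z) * ((1 + z) ^ 2 + z * (u ^ 2 + (u ^ 2)⁻¹ + v ^ 2 + (v ^ 2)⁻¹)) /
        ((1 - z * u ^ 2 * v ^ 2) * (1 - z * (u ^ 2)⁻¹ * v ^ 2) * (1 - z * u ^ 2 * (v ^ 2)⁻¹) *
          (1 - z * (u ^ 2)⁻¹ * (v ^ 2)⁻¹)) := by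
  -- the denominators in the shape `field_simp` produces after clearing `u⁻¹` and `v⁻¹`
  have h₁' : 1 - u ^ 2 * v ^ 2 * z ≠ 0 := fun h => h₁ (by linear_combination h)
  have h₂' : u ^ 2 - v ^ 2 * z ≠ 0 := fun h => h₂ (by field_simp; linear_combination h)
  have h₃' : v ^ 2 - u ^ 2 * z ≠ 0 := fun h => h₃ (by field_simp; linear_combination h)
  have h₄' : u ^ 2 * v ^ 2 - z ≠ 0 := fun h => h₄ (by field_simp; linear_combination h)
  field_simp
  ring

end Field

theorem norm_mul_mul_of_norm_eq_one [NormedDivisionRing K] (z : K) {a b : K} (ha : ‖a‖ = 1)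
    (hb : ‖b‖ = 1) : ‖z * a * b‖ = ‖z‖ := by
  rw [norm_mul, norm_mul, ha, hb, mul_one, mul_one]

theorem one_sub_ne_zero_of_norm_lt_one [SeminormedRing K] [NormOneClass K] {w : K}
    (hw : ‖w‖ < 1) : 1 - w ≠ 0 :=
  sub_ne_zero.2 (ne_of_apply_ne norm (by rw [norm_one]; exact hw.ne'))

/-- single-variable geometric-series identity (Type B entry formula). -/
theorem typeB_entry_series (u v z : ℂ) (hu : ‖u‖ = 1) (hv : ‖v‖ = 1)
    (hz : ‖z‖ < 1) (x y : ℂ) (hx : x = u ^ 2) (hy : y = v ^ 2) :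
    HasSum
      (fun k : ℕ =>
        z ^ k * (u ^ (2 * (k : ℤ) + 1) - u ^ (-(2 * (k : ℤ) + 1))) *
          (v ^ (2 * (k : ℤ) + 1) - v ^ (-(2 * (k : ℤ) + 1))))
      ((u - u⁻¹) * (v - v⁻¹) * (1 - z) * ((1 + z) ^ 2 + z * (x + x⁻¹ + y + y⁻¹)) /
        ((1 - z * x * y) * (1 - z * x⁻¹ * y) * (1 - z * x * y⁻¹) * (1 - z * x⁻¹ * y⁻¹))) := by
  subst hx hy
  have hsq {w : ℂ} (hw : ‖w‖ = 1) : ‖w ^ 2‖ = 1 := by rw [norm_pow, hw, one_pow]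
  have hsq_inv {w : ℂ} (hw : ‖w‖ = 1) : ‖(w ^ 2)⁻¹‖ = 1 := by rw [norm_inv, hsq hw, inv_one]
  have hratio {a b : ℂ} (ha : ‖a‖ = 1) (hb : ‖b‖ = 1) : ‖z * a * b‖ < 1 :=
    (norm_mul_mul_of_norm_eq_one z ha hb).trans_lt hz
  have h₁ := hratio (hsq hu) (hsq hv)
  have h₂ := hratio (hsq_inv hu) (hsq hv)
  have h₃ := hratio (hsq hu) (hsq_inv hv)
  have h₄ := hratio (hsq_inv hu) (hsq_inv hv)
  have hgeom := ((((hasSum_geometric_of_norm_lt_one h₁).mul_left (u * v)).sub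
    ((hasSum_geometric_of_norm_lt_one h₂).mul_left (u⁻¹ * v))).sub
    ((hasSum_geometric_of_norm_lt_one h₃).mul_left (u * v⁻¹))).add
    ((hasSum_geometric_of_norm_lt_one h₄).mul_left (u⁻¹ * v⁻¹))
  have hu₀ : u ≠ 0 := norm_ne_zero_iff.1 (by rw [hu]; exact one_ne_zero)
  have hv₀ : v ≠ 0 := norm_ne_zero_iff.1 (by rw [hv]; exact one_ne_zero)
  rw [signed_geom_sum_eq z hu₀ hv₀ (one_sub_ne_zero_of_norm_lt_one h₁)
    (one_sub_ne_zero_of_norm_lt_one h₂) (one_sub_ne_zero_of_norm_lt_one h₃)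
    (one_sub_ne_zero_of_norm_lt_one h₄)] at hgeom
  simpa only [pow_mul_sub_zpow_mul_sub_zpow_eq] using hgeom
end

section
/- Let x, y be complex numbers of modulus 1 and let z be a complex number with |z| < 1. Then the series ∑_{k=0}^∞ z^k (x^{k+1} − x^{−(k+1)})(y^{k+1} − y^{−(k+1)}) converges and equals (1 − z²)(x − x^{−1})(y − y^{−1}) / [ (1 − z x y)(1 − z x^{−1} y)(1 − z x y^{−1})(1 − z x^{−1} y^{−1}) ]. -/
/-!
Since `x ^ (-n) = x⁻¹ ^ n`, the `k`-th summand expands into four terms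
`± z ^ k * (x ^ a * y ^ b) ^ (k + 1)` with `a, b = ±1`: the series is a signed sum of four
geometric series whose ratios `z * x ^ a * y ^ b` all have modulus `‖z‖ < 1`. Summing them and
putting the four fractions over a common denominator gives the closed form.
-/

variable {K : Type*}

lemma hasSum_pow_mul_pow_succ [NormedField K] {z w : K} (h : ‖z * w‖ < 1) :
    HasSum (fun k : ℕ => z ^ k * w ^ (k + 1)) (w / (1 - z * w)) := by
  simpa [div_eq_mul_inv, pow_succ, mul_pow, mul_comm, mul_left_comm]
    using (hasSum_geometric_of_norm_lt_one h).mul_left w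

lemma zpow_natCast_succ_sub_zpow_neg [DivisionRing K] (x : K) (k : ℕ) :
    x ^ ((k : ℤ) + 1) - x ^ (-((k : ℤ) + 1)) = x ^ (k + 1) - x⁻¹ ^ (k + 1) := by
  rw [← Nat.cast_succ, zpow_neg, zpow_natCast, inv_pow]

lemma signed_sum_div_one_sub_eq [Field K] {x y z : K} (hx : x ≠ 0) (hy : y ≠ 0)
    (h₁ : 1 - z * x * y ≠ 0) (h₂ : 1 - z * x⁻¹ * y ≠ 0) (h₃ : 1 - z * x * y⁻¹ ≠ 0)
    (h₄ : 1 - z * x⁻¹ * y⁻¹ ≠ 0) :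
    x * y / (1 - z * x * y) - x⁻¹ * y / (1 - z * x⁻¹ * y) - x * y⁻¹ / (1 - z * x * y⁻¹)
        + x⁻¹ * y⁻¹ / (1 - z * x⁻¹ * y⁻¹) =
      (1 - z ^ 2) * (x - x⁻¹) * (y - y⁻¹) /
        ((1 - z * x * y) * (1 - z * x⁻¹ * y) * (1 - z * x * y⁻¹) * (1 - z * x⁻¹ * y⁻¹)) := by
  rw [div_sub_div _ _ h₁ h₂, div_sub_div _ _ (mul_ne_zero h₁ h₂) h₃,
    div_add_div _ _ (mul_ne_zero (mul_ne_zero h₁ h₂) h₃) h₄]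
  congr 1
  field_simp
  ring

/-- single-variable geometric-series identity (Type C entry formula). -/
theorem typeC_entry_series (x y z : ℂ) (hx : ‖x‖ = 1) (hy : ‖y‖ = 1)
    (hz : ‖z‖ < 1) :
    HasSum
      (fun k : ℕ =>
        z ^ k * (x ^ ((k : ℤ) + 1) - x ^ (-((k : ℤ) + 1))) *
          (y ^ ((k : ℤ) + 1) - y ^ (-((k : ℤ) + 1))))
      ((1 - z ^ 2) * (x - x⁻¹) * (y - y⁻¹) /
        ((1 - z * x * y) * (1 - z * x⁻¹ * y) * (1 - z * x * y⁻¹) * (1 - z * x⁻¹ * y⁻¹))) := by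
  have hx₀ : x ≠ 0 := norm_ne_zero_iff.1 (by rw [hx]; exact one_ne_zero)
  have hy₀ : y ≠ 0 := norm_ne_zero_iff.1 (by rw [hy]; exact one_ne_zero)
  have hx' : ‖x⁻¹‖ = 1 := by rw [norm_inv, hx, inv_one]
  have hy' : ‖y⁻¹‖ = 1 := by rw [norm_inv, hy, inv_one]
  have small : ∀ {u v : ℂ}, ‖u‖ = 1 → ‖v‖ = 1 → ‖z * u * v‖ < 1 := fun hu hv => by
    rwa [norm_mul, norm_mul, hu, hv, mul_one, mul_one]
  have ne : ∀ {u v : ℂ}, ‖u‖ = 1 → ‖v‖ = 1 → 1 - z * u * v ≠ 0 := fun hu hv =>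
    (isUnit_one_sub_of_norm_lt_one (small hu hv)).ne_zero
  have geom : ∀ {u v : ℂ}, ‖u‖ = 1 → ‖v‖ = 1 →
      HasSum (fun k : ℕ => z ^ k * (u * v) ^ (k + 1)) (u * v / (1 - z * u * v)) := fun hu hv => by
    rw [mul_assoc z]
    exact hasSum_pow_mul_pow_succ (by rw [← mul_assoc]; exact small hu hv)
  rw [← signed_sum_div_one_sub_eq hx₀ hy₀ (ne hx hy) (ne hx' hy) (ne hx hy') (ne hx' hy')]
  refine ((((geom hx hy).sub (geom hx' hy)).sub (geom hx hy')).add (geom hx' hy')).congr_fun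
    fun k => ?_
  rw [zpow_natCast_succ_sub_zpow_neg, zpow_natCast_succ_sub_zpow_neg]
  ring
end

section
/- Let m ≥ 1, let z be a complex number with |z| < 1, and let u_1,…,u_m, v_1,…,v_m be complex numbers of modulus 1. Let X be the m×m matrix with entries X_{ij} = ∑_{k=0}^∞ z^k (u_i^{2k+1} − u_i^{−(2k+1)})(v_j^{2k+1} − v_j^{−(2k+1)}) (each entry a convergent series). Then det(X) = ∑_λ z^{|λ|+binom(m,2)} · det_{1≤i,j≤m}( v_j^{2(λ_i+m−i)+1} − v_j^{−(2(λ_i+m−i)+1)} ) · det_{1≤i,j≤m}( u_j^{2(λ_i+m−i)+1} − u_j^{−(2(λ_i+m−i)+1)} ), where the sum runs over all partitions λ with at most m parts and converges absolutely. -/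
/-!
Each entry of `X` is an absolutely convergent series, so expanding the determinant multilinearly
in its rows writes `det X` as an absolutely convergent sum, over tuples `κ : Fin m → ℕ`, of
determinants whose `i`-th row is the `κ i`-th term of the `i`-th row series. Such a determinant
vanishes unless `κ` is injective, and an injective `κ` is uniquely `a ∘ τ` with `a` strictly
decreasing and `τ` a permutation; with `a i = λ i + m - 1 - i`, summing over `τ` at fixed `λ`
produces the product of the two alternants indexed by `λ`.
-/

open Finset Function Matrix Equiv

section AbsolutelySummable

variable {R : Type*} [NormedCommRing R] [CompleteSpace R] {β : Type*}

theorem summable_norm_prod_and_hasSum_prod_fin :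
    ∀ {n : ℕ} {f : Fin n → β → R}, (∀ i, Summable fun k => ‖f i k‖) →
      Summable (fun k : Fin n → β => ‖∏ i, f i (k i)‖) ∧
        HasSum (fun k : Fin n → β => ∏ i, f i (k i)) (∏ i, ∑' k, f i k)
  | 0, f, _ => ⟨.of_finite, by simp⟩
  | n + 1, f, hf => by
    obtain ⟨ihs, ihh⟩ := summable_norm_prod_and_hasSum_prod_fin fun i => hf i.succ
    let e := Fin.consEquiv fun _ : Fin (n + 1) => β
    have he (p) : ∏ i, f i (e p i) = f 0 p.1 * ∏ i : Fin n, f i.succ (p.2 i) :=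
      Fin.prod_univ_succ _
    constructor
    · exact e.summable_iff.1 <|
        ((hf 0).mul_norm ihs).congr fun p => congrArg norm (he p).symm
    · refine e.hasSum_iff.1 <| HasSum.congr_fun ?_ he
      rw [Fin.prod_univ_succ, ← ihh.tsum_eq, tsum_mul_tsum_of_summable_norm (hf 0) ihs]
      exact (summable_mul_of_summable_norm (hf 0) ihs).hasSum

theorem summable_norm_det_and_hasSum_det {m : ℕ} {F : β → Matrix (Fin m) (Fin m) R}
    (hF : ∀ i j, Summable fun k => ‖F k i j‖) :
    Summable (fun κ : Fin m → β => ‖det (of fun i j => F (κ i) i j)‖) ∧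
      HasSum (fun κ : Fin m → β => det (of fun i j => F (κ i) i j))
        (det (of fun i j => ∑' k, F k i j)) := by
  have hterm (σ : Perm (Fin m)) := summable_norm_prod_and_hasSum_prod_fin fun i => hF i (σ i)
  simp only [← det_transpose (of _), det_apply, transpose_apply, of_apply]
  refine ⟨.of_nonneg_of_le (fun _ => norm_nonneg _) (fun κ => ?_)
      (summable_sum (s := univ) fun σ _ => (hterm σ).1),
    hasSum_sum fun σ _ => (hterm σ).2.const_smul _⟩
  exact (norm_sum_le _ _).trans_eq (sum_congr rfl fun σ _ => norm_units_zsmul _ _)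

end AbsolutelySummable

section Fiberwise

variable {β γ δ : Type*} [Fintype δ] {Φ : γ × δ → β}

theorem HasSum.sum_fiberwise_of_injective {E : Type*} [AddCommMonoid E] [TopologicalSpace E]
    [ContinuousAdd E] [RegularSpace E] {f : β → E} {a : E} (hf : HasSum f a)
    (hΦ : Injective Φ) (hsupp : ∀ b ∉ Set.range Φ, f b = 0) :
    HasSum (fun c => ∑ d, f (Φ (c, d))) a :=
  ((hΦ.hasSum_iff hsupp).2 hf).prod_fiberwise fun _ => hasSum_fintype _

theorem Summable.norm_sum_fiberwise_of_injective {E : Type*} [SeminormedAddCommGroup E]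
    {f : β → E} (hf : Summable fun b => ‖f b‖)
    (hΦ : Injective Φ) (hsupp : ∀ b ∉ Set.range Φ, f b = 0) :
    Summable fun c => ‖∑ d, f (Φ (c, d))‖ :=
  .of_nonneg_of_le (fun _ => norm_nonneg _) (fun _ => norm_sum_le _ _)
    (hf.hasSum.sum_fiberwise_of_injective hΦ fun b hb => by simp [hsupp b hb]).summable

end Fiberwise

section SortingTuples

variable {α : Type*} [LinearOrder α] {m : ℕ}

theorem StrictAnti.eq_and_eq_of_comp_perm_eq {a a' : Fin m → α} (ha : StrictAnti a)
    (ha' : StrictAnti a') {τ τ' : Perm (Fin m)} (h : a ∘ τ = a' ∘ τ') :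
    a = a' ∧ τ = τ' := by
  have hrange : Set.range a = Set.range a' := by
    rw [← τ.surjective.range_comp, h, τ'.surjective.range_comp]
  obtain rfl := (ha.range_inj ha').1 hrange
  exact ⟨rfl, Perm.ext fun i => ha.injective (congrFun h i)⟩

theorem exists_strictAnti_comp_perm_eq {k : Fin m → α} (hk : Injective k) :
    ∃ a : Fin m → α, StrictAnti a ∧ ∃ τ : Perm (Fin m), a ∘ τ = k := by
  let π : Perm (Fin m) := Fin.revPerm.trans (Tuple.sort k)
  have hmono : StrictMono (k ∘ Tuple.sort k) :=
    (Tuple.monotone_sort k).strictMono_of_injective (hk.comp (Tuple.sort k).injective)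
  refine ⟨k ∘ π, hmono.comp_strictAnti Fin.rev_strictAnti, π.symm, ?_⟩
  ext i
  simp

end SortingTuples

section ShiftedParts

variable {m : ℕ}

/-- The exponents `a_i = λ_i + m - i` of the paper, with rows indexed from `0`. -/
def shiftedParts (m : ℕ) (l : Fin m → ℕ) : Fin m → ℕ := fun i => l i + (m - 1 - i)

theorem cast_shiftedParts (l : Fin m → ℕ) (i : Fin m) :
    (shiftedParts m l i : ℤ) = l i + m - 1 - (i : ℕ) := by
  have := i.isLt
  simp only [shiftedParts]
  omega

theorem sum_shiftedParts (l : Fin m → ℕ) :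
    ∑ i, shiftedParts m l i = ∑ i, l i + m.choose 2 := by
  simp only [shiftedParts, sum_add_distrib, Fin.sum_univ_eq_sum_range (fun i => m - 1 - i),
    sum_range_reflect (fun i => i), sum_range_id, Nat.choose_two_right]

theorem shiftedParts_injective : Injective (shiftedParts m) := fun l l' h =>
  funext fun i => by simpa [shiftedParts] using congrFun h i

theorem strictAnti_shiftedParts {l : Fin m → ℕ} (hl : Antitone l) :
    StrictAnti (shiftedParts m l) := fun i j hij => by
  have := hl hij.le
  have : (i : ℕ) < j := hij
  have := j.isLt
  simp only [shiftedParts]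
  omega

theorem exists_antitone_shiftedParts_eq {a : Fin m → ℕ} (ha : StrictAnti a) :
    ∃ l, Antitone l ∧ shiftedParts m l = a := by
  obtain _ | n := m
  · exact ⟨a, fun i => i.elim0, funext fun i => i.elim0⟩
  have hanti : Antitone fun i : Fin (n + 1) => a i + i :=
    Fin.antitone_iff_succ_le.2 fun i => by
      have := ha (Fin.castSucc_lt_succ (i := i))
      simp only [Fin.val_succ, Fin.val_castSucc]
      omega
  refine ⟨fun i => a i + i - n, fun i j hij => ?_, funext fun i => ?_⟩
  · have := hanti hij
    simp only at this ⊢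
    omega
  · have hlast := hanti (Fin.le_last i)
    have := i.isLt
    simp only [shiftedParts, Fin.val_last] at hlast ⊢
    omega

theorem injective_shiftedParts_comp_perm :
    Injective fun p : {l : Fin m → ℕ // Antitone l} × Perm (Fin m) =>
      shiftedParts m p.1 ∘ p.2 := by
  rintro ⟨⟨l, hl⟩, τ⟩ ⟨⟨l', hl'⟩, τ'⟩ h
  obtain ⟨hll', rfl⟩ :=
    (strictAnti_shiftedParts hl).eq_and_eq_of_comp_perm_eq (strictAnti_shiftedParts hl') h
  obtain rfl := shiftedParts_injective hll'
  rfl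

theorem exists_shiftedParts_comp_perm_eq {k : Fin m → ℕ} (hk : Injective k) :
    ∃ p : {l : Fin m → ℕ // Antitone l} × Perm (Fin m), shiftedParts m p.1 ∘ p.2 = k := by
  obtain ⟨a, ha, τ, rfl⟩ := exists_strictAnti_comp_perm_eq hk
  obtain ⟨l, hl, rfl⟩ := exists_antitone_shiftedParts_eq ha
  exact ⟨(⟨l, hl⟩, τ), rfl⟩

end ShiftedParts

section DetOfComp

variable {R n α : Type*} [CommRing R] [Fintype n] [DecidableEq n]

theorem det_of_mul_mul_comp (c : α → R) (f g : n → α → R) (k : n → α) :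
    det (of fun i j => c (k i) * f i (k i) * g j (k i)) =
      (∏ i, c (k i) * f i (k i)) * det (of fun i j => g j (k i)) :=
  det_mul_column (fun i => c (k i) * f i (k i)) (of fun i j => g j (k i))

theorem det_of_comp_eq_zero {k : n → α} (hk : ¬Injective k) (g : n → α → R) :
    det (of fun i j => g j (k i)) = 0 := by
  obtain ⟨i, j, hkij, hij⟩ := not_injective_iff.1 hk
  exact det_zero_of_row_eq hij (funext fun _ => by simp [hkij])

theorem sum_perm_det_of_mul_mul_comp_perm (c : α → R) (f g : n → α → R) (a : n → α) :
    ∑ τ : Perm n, det (of fun i j => c (a (τ i)) * f i (a (τ i)) * g j (a (τ i))) =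
      (∏ i, c (a i)) * det (of fun i j => g j (a i)) * det (of fun i j => f j (a i)) := by
  have hterm (τ : Perm n) :
      det (of fun i j => c (a (τ i)) * f i (a (τ i)) * g j (a (τ i))) =
        (∏ i, c (a i)) * det (of fun i j => g j (a i)) *
          (Perm.sign τ * ∏ i, f i (a (τ i))) := by
    refine (det_of_mul_mul_comp c f g (a ∘ τ)).trans ?_
    rw [comp_def, prod_mul_distrib, Equiv.prod_comp τ (fun i => c (a i)),
      show of (fun i j => g j (a (τ i))) = (of fun i j => g j (a i)).submatrix τ id from rfl,
      det_permute]
    ring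
  simp_rw [hterm, ← mul_sum, det_apply' (of fun i j => f j (a i)), of_apply]

end DetOfComp

section OddPowDiff

variable {K : Type*} [NormedDivisionRing K]

/-- `w ^ (n + 1/2) - w ^ -(n + 1/2)` in the variable `w ^ 2`. -/
def oddPowDiff (w : K) (n : ℤ) : K := w ^ (2 * n + 1) - w ^ (-(2 * n + 1))

theorem norm_oddPowDiff_le {w : K} (hw : ‖w‖ = 1) (n : ℤ) : ‖oddPowDiff w n‖ ≤ 2 :=
  (norm_sub_le _ _).trans_eq (by simp only [norm_zpow, hw, _root_.one_zpow]; norm_num)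

theorem summable_norm_pow_mul_oddPowDiff_mul_oddPowDiff {z w w' : K} (hz : ‖z‖ < 1)
    (hw : ‖w‖ = 1) (hw' : ‖w'‖ = 1) :
    Summable fun k : ℕ => ‖z ^ k * oddPowDiff w k * oddPowDiff w' k‖ := by
  refine .of_nonneg_of_le (fun _ => norm_nonneg _) (fun k => ?_)
    ((summable_geometric_of_lt_one (norm_nonneg z) hz).mul_right (2 * 2))
  rw [norm_mul, norm_mul, norm_pow, mul_assoc]
  gcongr
  · exact norm_oddPowDiff_le hw k
  · exact norm_oddPowDiff_le hw' k

end OddPowDiff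

theorem det_expansion_SO_odd_general (m : ℕ) (z : ℂ) (hz : ‖z‖ < 1)
    (u v : Fin m → ℂ) (hu : ∀ i, ‖u i‖ = 1) (hv : ∀ i, ‖v i‖ = 1)
    (X : Matrix (Fin m) (Fin m) ℂ)
    (hX : ∀ i j, HasSum
      (fun k : ℕ =>
        z ^ k * (u i ^ (2 * (k : ℤ) + 1) - u i ^ (-(2 * (k : ℤ) + 1))) *
          (v j ^ (2 * (k : ℤ) + 1) - v j ^ (-(2 * (k : ℤ) + 1))))
      (X i j)) :
    Summable
      (fun l : {l : Fin m → ℕ // Antitone l} =>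
        ‖(z ^ (∑ i, l.1 i + m.choose 2) *
            Matrix.det (fun i j : Fin m =>
              v j ^ (2 * ((l.1 i : ℤ) + (m : ℤ) - 1 - (i : ℕ)) + 1) -
                v j ^ (-(2 * ((l.1 i : ℤ) + (m : ℤ) - 1 - (i : ℕ)) + 1))) *
            Matrix.det (fun i j : Fin m =>
              u j ^ (2 * ((l.1 i : ℤ) + (m : ℤ) - 1 - (i : ℕ)) + 1) -
                u j ^ (-(2 * ((l.1 i : ℤ) + (m : ℤ) - 1 - (i : ℕ)) + 1))))‖) ∧
    HasSum
      (fun l : {l : Fin m → ℕ // Antitone l} =>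
        z ^ (∑ i, l.1 i + m.choose 2) *
          Matrix.det (fun i j : Fin m =>
            v j ^ (2 * ((l.1 i : ℤ) + (m : ℤ) - 1 - (i : ℕ)) + 1) -
              v j ^ (-(2 * ((l.1 i : ℤ) + (m : ℤ) - 1 - (i : ℕ)) + 1))) *
          Matrix.det (fun i j : Fin m =>
            u j ^ (2 * ((l.1 i : ℤ) + (m : ℤ) - 1 - (i : ℕ)) + 1) -
              u j ^ (-(2 * ((l.1 i : ℤ) + (m : ℤ) - 1 - (i : ℕ)) + 1))))
      (Matrix.det X) := by
  set G : (Fin m → ℕ) → ℂ := fun κ =>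
    det (of fun i j => z ^ κ i * oddPowDiff (u i) (κ i) * oddPowDiff (v j) (κ i))
  obtain ⟨hGs, hG⟩ := summable_norm_det_and_hasSum_det
    (F := fun (k : ℕ) i j => z ^ k * oddPowDiff (u i) k * oddPowDiff (v j) k)
    fun i j => summable_norm_pow_mul_oddPowDiff_mul_oddPowDiff hz (hu i) (hv j)
  rw [show (of fun i j => ∑' k : ℕ, z ^ k * oddPowDiff (u i) k * oddPowDiff (v j) k) = X from
    ext fun i j => (hX i j).tsum_eq] at hG
  have hsupp : ∀ κ ∉ Set.range fun p : {l : Fin m → ℕ // Antitone l} × Perm (Fin m) =>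
      shiftedParts m p.1 ∘ p.2, G κ = 0 := fun κ hκ =>
    (det_of_mul_mul_comp (z ^ ·) (fun i (k : ℕ) => oddPowDiff (u i) k)
      (fun j (k : ℕ) => oddPowDiff (v j) k) κ).trans <| mul_eq_zero_of_right _ <|
        det_of_comp_eq_zero (fun hinj => hκ (exists_shiftedParts_comp_perm_eq hinj))
          fun j (k : ℕ) => oddPowDiff (v j) k
  have hfiber (l : {l : Fin m → ℕ // Antitone l}) :
      ∑ τ : Perm (Fin m), G (shiftedParts m l ∘ τ) = z ^ (∑ i, l.1 i + m.choose 2) *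
        det (of fun i j => oddPowDiff (v j) ((l.1 i : ℤ) + m - 1 - (i : ℕ))) *
        det (of fun i j => oddPowDiff (u j) ((l.1 i : ℤ) + m - 1 - (i : ℕ))) := by
    refine (sum_perm_det_of_mul_mul_comp_perm (z ^ ·) (fun i (k : ℕ) => oddPowDiff (u i) k)
      (fun j (k : ℕ) => oddPowDiff (v j) k) (shiftedParts m l)).trans ?_
    simp only [prod_pow_eq_pow_sum, sum_shiftedParts, cast_shiftedParts]
  exact ⟨(hGs.norm_sum_fiberwise_of_injective injective_shiftedParts_comp_perm hsupp).congr
      fun l => congrArg norm (hfiber l),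
    (hG.sum_fiberwise_of_injective injective_shiftedParts_comp_perm hsupp).congr_fun
      fun l => (hfiber l).symm⟩

/-- determinant-expansion step for SO(2m+1). The sum over partitions with
at most `m` parts (antitone functions `Fin m → ℕ`) converges absolutely to `det X`,
where `X i j` is the convergent series `∑_k z^k (u_i^(2k+1) − u_i^(−(2k+1)))(v_j^(2k+1) − v_j^(−(2k+1)))`. -/
theorem det_expansion_SO_odd (m : ℕ) (hm : 1 ≤ m) (z : ℂ) (hz : ‖z‖ < 1)
    (u v : Fin m → ℂ) (hu : ∀ i, ‖u i‖ = 1) (hv : ∀ i, ‖v i‖ = 1)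
    (X : Matrix (Fin m) (Fin m) ℂ)
    (hX : ∀ i j, HasSum
      (fun k : ℕ =>
        z ^ k * (u i ^ (2 * (k : ℤ) + 1) - u i ^ (-(2 * (k : ℤ) + 1))) *
          (v j ^ (2 * (k : ℤ) + 1) - v j ^ (-(2 * (k : ℤ) + 1))))
      (X i j)) :
    Summable
      (fun l : {l : Fin m → ℕ // Antitone l} =>
        ‖(z ^ (∑ i, l.1 i + m.choose 2) *
            Matrix.det (fun i j : Fin m =>
              v j ^ (2 * ((l.1 i : ℤ) + (m : ℤ) - 1 - (i : ℕ)) + 1) -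
                v j ^ (-(2 * ((l.1 i : ℤ) + (m : ℤ) - 1 - (i : ℕ)) + 1))) *
            Matrix.det (fun i j : Fin m =>
              u j ^ (2 * ((l.1 i : ℤ) + (m : ℤ) - 1 - (i : ℕ)) + 1) -
                u j ^ (-(2 * ((l.1 i : ℤ) + (m : ℤ) - 1 - (i : ℕ)) + 1))))‖) ∧
    HasSum
      (fun l : {l : Fin m → ℕ // Antitone l} =>
        z ^ (∑ i, l.1 i + m.choose 2) *
          Matrix.det (fun i j : Fin m =>
            v j ^ (2 * ((l.1 i : ℤ) + (m : ℤ) - 1 - (i : ℕ)) + 1) -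
              v j ^ (-(2 * ((l.1 i : ℤ) + (m : ℤ) - 1 - (i : ℕ)) + 1))) *
          Matrix.det (fun i j : Fin m =>
            u j ^ (2 * ((l.1 i : ℤ) + (m : ℤ) - 1 - (i : ℕ)) + 1) -
              u j ^ (-(2 * ((l.1 i : ℤ) + (m : ℤ) - 1 - (i : ℕ)) + 1))))
      (Matrix.det X) :=
  det_expansion_SO_odd_general m z hz u v hu hv X hX
end

section
/- Let m ≥ 1, let z be a complex number with |z| < 1, and let x_1,…,x_m, y_1,…,y_m be complex numbers of modulus 1. Let X be the m×m matrix with entries X_{ij} = ∑_{k=0}^∞ z^k (x_i^{k+1} − x_i^{−(k+1)})(y_j^{k+1} − y_j^{−(k+1)}) (each entry a convergent series). Then det(X) = ∑_λ z^{|λ|+binom(m,2)} · det_{1≤i,j≤m}( y_j^{λ_i+m−i+1} − y_j^{−(λ_i+m−i+1)} ) · det_{1≤i,j≤m}( x_j^{λ_i+m−i+1} − x_j^{−(λ_i+m−i+1)} ), where the sum runs over all partitions λ with at most m parts and converges absolutely. -/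
/-!
Write `X = A * B` as an absolutely convergent product of an `m × ℕ` and an `ℕ × m` matrix, with
`A i k = x_i^(k+1) - x_i^(-(k+1))` and `B k j = z^k (y_j^(k+1) - y_j^(-(k+1)))`. Expanding
`det X` multilinearly in the columns gives
`∑_{k : Fin m → ℕ} det (A restricted to columns k) * ∏_j B (k j) j`, where only injective `k`
contribute. Grouping every injective `k` with its decreasing rearrangement `n` gives the infinite
Cauchy–Binet formula `det X = ∑_{n strictly decreasing} det A_{·,n} * det B_{n,·}`. Finally
`n = λ + δ` with the staircase `δ = (m - 1, …, 1, 0)` turns this into a sum over partitions, and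
`z^(|λ| + binom(m,2)) = z^|n|` comes out of the rows of `B_{n,·}`.
-/

open Finset Function Matrix Equiv

section PiProduct

variable {ι R : Type*}

theorem summable_prod_pi_of_nonneg : ∀ {m : ℕ} {f : Fin m → ι → ℝ}, (∀ i k, 0 ≤ f i k) →
    (∀ i, Summable (f i)) → Summable fun k : Fin m → ι => ∏ i, f i (k i)
  | 0, _, _, _ => .of_finite
  | _ + 1, f, h0, hf => by
    refine (Fin.consEquiv fun _ => ι).summable_iff.mp <| ((hf 0).mul_of_nonneg
      (summable_prod_pi_of_nonneg (fun i => h0 i.succ) fun i => hf i.succ) (h0 0)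
      fun t => prod_nonneg fun i _ => h0 _ _).congr fun p => ?_
    simp [Fin.prod_univ_succ]

variable [NormedCommRing R] [NormOneClass R] [CompleteSpace R]

theorem hasSum_prod_pi_of_summable_norm {m : ℕ} {f : Fin m → ι → R} {s : Fin m → R}
    (hf : ∀ i, HasSum (f i) (s i)) (hf' : ∀ i, Summable fun k => ‖f i k‖) :
    HasSum (fun k : Fin m → ι => ∏ i, f i (k i)) (∏ i, s i) := by
  induction m with
  | zero => simp
  | succ m ih =>
    have htail : Summable fun t : Fin m → ι => ‖∏ i, f i.succ (t i)‖ :=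
      (summable_prod_pi_of_nonneg (fun i k => norm_nonneg (f i.succ k)) fun i => hf' i.succ
        ).of_nonneg_of_le (fun _ => norm_nonneg _) fun t => norm_prod_le _ _
    have hprod : HasSum (fun p : ι × (Fin m → ι) => f 0 p.1 * ∏ i : Fin m, f i.succ (p.2 i))
        (s 0 * ∏ i : Fin m, s i.succ) :=
      HasSum.mul (g := fun t : Fin m → ι => ∏ i : Fin m, f i.succ (t i)) (hf 0)
        (ih (fun i => hf i.succ) fun i => hf' i.succ)
        (summable_mul_of_summable_norm (f := f 0)
          (g := fun t : Fin m → ι => ∏ i : Fin m, f i.succ (t i)) (hf' 0) htail)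
    rw [Fin.prod_univ_succ]
    refine (Fin.consEquiv fun _ => ι).hasSum_iff.mp <| hprod.congr fun p => ?_
    simp [Fin.prod_univ_succ]

end PiProduct

section DetExpansion

variable {ι R : Type*} [CommRing R] {m : ℕ} (A : Matrix (Fin m) ι R) (B : Matrix ι (Fin m) R)

theorem det_submatrix_mul_prod_eq_sum (k : Fin m → ι) :
    (A.submatrix id k).det * ∏ j, B (k j) j =
      ∑ σ : Perm (Fin m), ((Perm.sign σ : ℤ) : R) * ∏ j, A (σ j) (k j) * B (k j) j := by
  simp only [det_apply', sum_mul, prod_mul_distrib, submatrix_apply, id, mul_assoc]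

theorem sum_perm_det_submatrix_mul_prod (n : Fin m → ι) :
    ∑ σ : Perm (Fin m), (A.submatrix id (n ∘ σ)).det * ∏ j, B (n (σ j)) j =
      (A.submatrix id n).det * (B.submatrix n id).det := by
  have hperm (σ : Perm (Fin m)) : (A.submatrix id (n ∘ σ)).det =
      ((Perm.sign σ : ℤ) : R) * (A.submatrix id n).det := by
    rw [← det_permute' σ (A.submatrix id n)]
    rfl
  simp only [hperm, det_apply' (B.submatrix n id), mul_sum, submatrix_apply, id, mul_assoc,
    mul_left_comm]

theorem support_det_submatrix_mul_prod_subset :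
    support (fun k : Fin m → ι => (A.submatrix id k).det * ∏ j, B (k j) j) ⊆
      {k | Injective k} := by
  intro k hk
  by_contra hinj
  obtain ⟨p, q, hpq, hne⟩ := not_injective_iff.1 hinj
  refine hk ?_
  dsimp only
  rw [det_zero_of_column_eq hne fun i => by simp [hpq], zero_mul]

end DetExpansion

theorem norm_intCast_sign_mul_le {R : Type*} [NormedRing R] [NormOneClass R] {m : ℕ}
    (σ : Perm (Fin m)) (r : R) : ‖((Perm.sign σ : ℤ) : R) * r‖ ≤ ‖r‖ := by
  rcases Int.units_eq_one_or (Perm.sign σ) with h | h <;> simp [h]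

section ColumnExpansion

variable {ι R : Type*} [NormedCommRing R] [NormOneClass R] {m : ℕ}
  {A : Matrix (Fin m) ι R} {B : Matrix ι (Fin m) R}

theorem hasSum_det_submatrix_mul_prod [CompleteSpace R] {X : Matrix (Fin m) (Fin m) R}
    (hX : ∀ i j, HasSum (fun k => A i k * B k j) (X i j))
    (habs : ∀ i j, Summable fun k => ‖A i k * B k j‖) :
    HasSum (fun k : Fin m → ι => (A.submatrix id k).det * ∏ j, B (k j) j) X.det := by
  simp only [det_submatrix_mul_prod_eq_sum, det_apply' X]
  exact hasSum_sum fun σ _ =>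
    (hasSum_prod_pi_of_summable_norm (fun j => hX (σ j) j) fun j => habs (σ j) j).mul_left _

theorem summable_norm_det_submatrix_mul_prod (habs : ∀ i j, Summable fun k => ‖A i k * B k j‖) :
    Summable fun k : Fin m → ι => ‖(A.submatrix id k).det * ∏ j, B (k j) j‖ := by
  have hbound : Summable fun k : Fin m → ι =>
      ∑ σ : Perm (Fin m), ∏ j, ‖A (σ j) (k j) * B (k j) j‖ :=
    summable_sum fun σ _ => summable_prod_pi_of_nonneg
      (f := fun j k => ‖A (σ j) k * B k j‖) (fun j k => norm_nonneg _) fun j => habs (σ j) j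
  refine hbound.of_nonneg_of_le (fun _ => norm_nonneg _) fun k => ?_
  rw [det_submatrix_mul_prod_eq_sum]
  exact (norm_sum_le _ _).trans <| sum_le_sum fun σ _ =>
    (norm_intCast_sign_mul_le σ _).trans (norm_prod_le _ _)

end ColumnExpansion

section SortedTuples

variable {α : Type*} [LinearOrder α] {m : ℕ}

theorem bijective_strictAnti_comp_perm :
    Bijective fun p : {n : Fin m → α // StrictAnti n} × Perm (Fin m) =>
      (⟨p.1.1 ∘ p.2, p.1.2.injective.comp p.2.injective⟩ : {k : Fin m → α // Injective k}) := by
  constructor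
  · rintro ⟨⟨n₁, hn₁⟩, σ₁⟩ ⟨⟨n₂, hn₂⟩, σ₂⟩ h
    have hk : n₁ ∘ σ₁ = n₂ ∘ σ₂ := congrArg Subtype.val h
    have e₁ : (n₁ ∘ σ₁) ∘ ⇑σ₁⁻¹ = n₁ := by ext; simp
    have e₂ : (n₁ ∘ σ₁) ∘ ⇑σ₂⁻¹ = n₂ := by rw [hk]; ext; simp
    obtain rfl : n₁ = n₂ := e₁.symm.trans <| (Tuple.unique_antitone (f := n₁ ∘ σ₁)
      (by rw [e₁]; exact hn₁.antitone) (by rw [e₂]; exact hn₂.antitone)).trans e₂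
    obtain rfl : σ₁ = σ₂ := Equiv.ext fun i => hn₁.injective (congrFun hk i)
    rfl
  · rintro ⟨k, hk⟩
    set σ := Tuple.sort (OrderDual.toDual ∘ k)
    have hanti : Antitone (k ∘ σ) := Tuple.monotone_sort (OrderDual.toDual ∘ k)
    refine ⟨(⟨k ∘ σ, hanti.strictAnti_of_injective (hk.comp σ.injective)⟩, σ⁻¹), ?_⟩
    ext i
    simp

noncomputable def strictAntiProdPermEquiv :
    {n : Fin m → α // StrictAnti n} × Perm (Fin m) ≃ {k : Fin m → α // Injective k} :=
  Equiv.ofBijective _ bijective_strictAnti_comp_perm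

variable {E : Type*} [NormedAddCommGroup E] {g : (Fin m → α) → E}

theorem HasSum.sum_perm_comp_strictAnti {a : E} (hg : HasSum g a)
    (hsupp : support g ⊆ {k | Injective k}) :
    HasSum (fun n : {n : Fin m → α // StrictAnti n} => ∑ σ : Perm (Fin m), g (n.1 ∘ σ)) a := by
  have hinj : HasSum (fun k : {k : Fin m → α // Injective k} => g k) a :=
    (hasSum_subtype_iff_of_support_subset hsupp).2 hg
  have hpairs : HasSum (fun p : {n : Fin m → α // StrictAnti n} × Perm (Fin m) =>
      g (p.1.1 ∘ p.2)) a :=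
    strictAntiProdPermEquiv.hasSum_iff.2 hinj
  exact hpairs.prod_fiberwise fun n => hasSum_fintype fun σ : Perm (Fin m) => g (n.1 ∘ σ)

theorem Summable.norm_sum_perm_comp_strictAnti (hg : Summable fun k => ‖g k‖) :
    Summable fun n : {n : Fin m → α // StrictAnti n} => ‖∑ σ : Perm (Fin m), g (n.1 ∘ σ)‖ := by
  have hinj : Summable fun k : {k : Fin m → α // Injective k} => ‖g k‖ := hg.subtype _
  have hpairs : Summable fun p : {n : Fin m → α // StrictAnti n} × Perm (Fin m) =>
      ‖g (p.1.1 ∘ p.2)‖ :=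
    strictAntiProdPermEquiv.summable_iff.2 hinj
  exact (summable_sum fun σ _ => hpairs.comp_injective (i := fun n => (n, σ))
    fun _ _ h => (Prod.ext_iff.1 h).1).of_nonneg_of_le (fun _ => norm_nonneg _)
    fun _ => norm_sum_le _ _

end SortedTuples

section CauchyBinet

variable {ι R : Type*} [LinearOrder ι] [NormedCommRing R] [NormOneClass R]
  {m : ℕ} {A : Matrix (Fin m) ι R} {B : Matrix ι (Fin m) R}

theorem hasSum_det_submatrix_mul_det_submatrix [CompleteSpace R] {X : Matrix (Fin m) (Fin m) R}
    (hX : ∀ i j, HasSum (fun k => A i k * B k j) (X i j))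
    (habs : ∀ i j, Summable fun k => ‖A i k * B k j‖) :
    HasSum (fun n : {n : Fin m → ι // StrictAnti n} =>
      (A.submatrix id n.1).det * (B.submatrix n.1 id).det) X.det := by
  simp only [← sum_perm_det_submatrix_mul_prod]
  exact (hasSum_det_submatrix_mul_prod hX habs).sum_perm_comp_strictAnti
    (support_det_submatrix_mul_prod_subset A B)

theorem summable_norm_det_submatrix_mul_det_submatrix
    (habs : ∀ i j, Summable fun k => ‖A i k * B k j‖) :
    Summable fun n : {n : Fin m → ι // StrictAnti n} =>
      ‖(A.submatrix id n.1).det * (B.submatrix n.1 id).det‖ := by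
  simp only [← sum_perm_det_submatrix_mul_prod]
  exact (summable_norm_det_submatrix_mul_prod habs).norm_sum_perm_comp_strictAnti

end CauchyBinet

section Staircase

variable {m : ℕ}

theorem Fin.val_le_of_strictMono {f : Fin m → ℕ} (hf : StrictMono f) (i : Fin m) :
    (i : ℕ) ≤ f i := by
  obtain ⟨k, hk⟩ := i
  induction k with
  | zero => exact Nat.zero_le _
  | succ k ih =>
    have hlt : f ⟨k, by omega⟩ < f ⟨k + 1, hk⟩ := hf (Fin.mk_lt_mk.2 k.lt_succ_self)
    have hle : k ≤ f ⟨k, by omega⟩ := ih (by omega)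
    show k + 1 ≤ _
    omega

theorem StrictAnti.val_rev_le {n : Fin m → ℕ} (hn : StrictAnti n) (i : Fin m) :
    (i.rev : ℕ) ≤ n i := by
  simpa using Fin.val_le_of_strictMono (hn.comp Fin.rev_strictAnti) i.rev

theorem antitone_iff_strictAnti_add_rev {l : Fin m → ℕ} :
    Antitone l ↔ StrictAnti fun i => l i + (i.rev : ℕ) := by
  cases m with
  | zero => exact iff_of_true (fun i => i.elim0) fun i => i.elim0
  | succ m =>
    rw [Fin.antitone_iff_succ_le, Fin.strictAnti_iff_succ_lt]
    refine forall_congr' fun i => ?_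
    simp only [Fin.val_rev, Fin.val_succ, Fin.val_castSucc]
    omega

/-- Adding the staircase `(m - 1, …, 1, 0)` turns partitions into strict partitions. -/
def antitoneEquivStrictAnti :
    {l : Fin m → ℕ // Antitone l} ≃ {n : Fin m → ℕ // StrictAnti n} where
  toFun l := ⟨fun i => l.1 i + i.rev, antitone_iff_strictAnti_add_rev.1 l.2⟩
  invFun n := ⟨fun i => n.1 i - i.rev, antitone_iff_strictAnti_add_rev.2 <| by
    simpa only [Nat.sub_add_cancel (n.2.val_rev_le _)] using n.2⟩
  left_inv l := by ext; simp
  right_inv n := by ext i; exact Nat.sub_add_cancel (n.2.val_rev_le i)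

theorem sum_val_rev : ∑ i : Fin m, (i.rev : ℕ) = m.choose 2 := by
  rw [Fintype.sum_equiv Fin.revPerm (fun i : Fin m => (i.rev : ℕ)) (fun i => (i : ℕ))
      fun _ => rfl, Fin.sum_univ_eq_sum_range (fun i => i) m, sum_range_id, Nat.choose_two_right]

theorem natCast_add_val_rev_add_one (a : ℕ) (i : Fin m) :
    (((a + i.rev : ℕ) : ℤ) + 1) = (a : ℤ) + m - (i : ℕ) := by
  have := i.isLt
  rw [Fin.val_rev]
  omega

end Staircase

section Symplectic

variable {m : ℕ}

theorem norm_zpow_sub_zpow_neg_le {w : ℂ} (hw : ‖w‖ = 1) (n : ℤ) : ‖w ^ n - w ^ (-n)‖ ≤ 2 := by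
  calc ‖w ^ n - w ^ (-n)‖ ≤ ‖w ^ n‖ + ‖w ^ (-n)‖ := norm_sub_le _ _
    _ = 2 := by rw [norm_zpow, norm_zpow, hw, _root_.one_zpow, _root_.one_zpow]; norm_num

noncomputable def spLeft (x : Fin m → ℂ) : Matrix (Fin m) ℕ ℂ :=
  of fun i k => x i ^ ((k : ℤ) + 1) - x i ^ (-((k : ℤ) + 1))

noncomputable def spRight (z : ℂ) (y : Fin m → ℂ) : Matrix ℕ (Fin m) ℂ :=
  of fun k j => z ^ k * (y j ^ ((k : ℤ) + 1) - y j ^ (-((k : ℤ) + 1)))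

theorem summable_norm_spLeft_mul_spRight {z : ℂ} (hz : ‖z‖ < 1) {x y : Fin m → ℂ}
    (hx : ∀ i, ‖x i‖ = 1) (hy : ∀ i, ‖y i‖ = 1) (i j : Fin m) :
    Summable fun k => ‖spLeft x i k * spRight z y k j‖ := by
  refine .of_nonneg_of_le (fun _ => norm_nonneg _) (fun k => ?_)
    ((summable_geometric_of_lt_one (norm_nonneg z) hz).mul_left 4)
  have hxk := norm_zpow_sub_zpow_neg_le (hx i) ((k : ℤ) + 1)
  have hyk := norm_zpow_sub_zpow_neg_le (hy j) ((k : ℤ) + 1)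
  simp only [spLeft, spRight, of_apply, norm_mul, norm_pow]
  calc _ ≤ 2 * (‖z‖ ^ k * 2) := by gcongr
    _ = 4 * ‖z‖ ^ k := by ring

theorem summand_eq_det_submatrix_mul_det_submatrix (z : ℂ) (x y : Fin m → ℂ)
    (l : {l : Fin m → ℕ // Antitone l}) :
    z ^ (∑ i, l.1 i + m.choose 2) *
        Matrix.det (fun i j : Fin m =>
          y j ^ ((l.1 i : ℤ) + (m : ℤ) - (i : ℕ)) - y j ^ (-((l.1 i : ℤ) + (m : ℤ) - (i : ℕ)))) *
        Matrix.det (fun i j : Fin m =>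
          x j ^ ((l.1 i : ℤ) + (m : ℤ) - (i : ℕ)) - x j ^ (-((l.1 i : ℤ) + (m : ℤ) - (i : ℕ)))) =
      ((spLeft x).submatrix id (antitoneEquivStrictAnti l).1).det *
        ((spRight z y).submatrix (antitoneEquivStrictAnti l).1 id).det := by
  set n := (antitoneEquivStrictAnti l).1
  set Y : Matrix (Fin m) (Fin m) ℂ := fun i j =>
    y j ^ ((l.1 i : ℤ) + (m : ℤ) - (i : ℕ)) - y j ^ (-((l.1 i : ℤ) + (m : ℤ) - (i : ℕ)))
  set X : Matrix (Fin m) (Fin m) ℂ := fun i j =>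
    x j ^ ((l.1 i : ℤ) + (m : ℤ) - (i : ℕ)) - x j ^ (-((l.1 i : ℤ) + (m : ℤ) - (i : ℕ)))
  have hn (i : Fin m) : ((n i : ℤ) + 1) = (l.1 i : ℤ) + m - (i : ℕ) :=
    natCast_add_val_rev_add_one (l.1 i) i
  have hsum : ∑ i, l.1 i + m.choose 2 = ∑ i, n i := by
    simp only [n, antitoneEquivStrictAnti, Equiv.coe_fn_mk, sum_add_distrib, sum_val_rev]
  have hleft : (spLeft x).submatrix id n = Xᵀ := by
    ext i j
    simp only [spLeft, submatrix_apply, of_apply, id, hn]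
    rfl
  have hright : (spRight z y).submatrix n id = of fun i j => z ^ n i * Y i j := by
    ext i j
    simp only [spRight, submatrix_apply, of_apply, id, hn, Y]
  rw [hleft, hright, det_transpose, det_mul_column, prod_pow_eq_pow_sum, hsum]
  ring

end Symplectic

theorem det_expansion_Sp_general (m : ℕ) (z : ℂ) (hz : ‖z‖ < 1)
    (x y : Fin m → ℂ) (hx : ∀ i, ‖x i‖ = 1) (hy : ∀ i, ‖y i‖ = 1)
    (X : Matrix (Fin m) (Fin m) ℂ)
    (hX : ∀ i j, HasSum
      (fun k : ℕ =>
        z ^ k * (x i ^ ((k : ℤ) + 1) - x i ^ (-((k : ℤ) + 1))) *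
          (y j ^ ((k : ℤ) + 1) - y j ^ (-((k : ℤ) + 1))))
      (X i j)) :
    Summable
      (fun l : {l : Fin m → ℕ // Antitone l} =>
        ‖(z ^ (∑ i, l.1 i + m.choose 2) *
            Matrix.det (fun i j : Fin m =>
              y j ^ ((l.1 i : ℤ) + (m : ℤ) - (i : ℕ)) -
                y j ^ (-((l.1 i : ℤ) + (m : ℤ) - (i : ℕ)))) *
            Matrix.det (fun i j : Fin m =>
              x j ^ ((l.1 i : ℤ) + (m : ℤ) - (i : ℕ)) -
                x j ^ (-((l.1 i : ℤ) + (m : ℤ) - (i : ℕ)))))‖) ∧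
    HasSum
      (fun l : {l : Fin m → ℕ // Antitone l} =>
        z ^ (∑ i, l.1 i + m.choose 2) *
          Matrix.det (fun i j : Fin m =>
            y j ^ ((l.1 i : ℤ) + (m : ℤ) - (i : ℕ)) -
              y j ^ (-((l.1 i : ℤ) + (m : ℤ) - (i : ℕ)))) *
          Matrix.det (fun i j : Fin m =>
            x j ^ ((l.1 i : ℤ) + (m : ℤ) - (i : ℕ)) -
              x j ^ (-((l.1 i : ℤ) + (m : ℤ) - (i : ℕ)))))
      (Matrix.det X) := by
  have hAB (i j : Fin m) : HasSum (fun k => spLeft x i k * spRight z y k j) (X i j) := by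
    convert hX i j using 2 with k
    simp only [spLeft, spRight, of_apply]
    ring
  have habs := summable_norm_spLeft_mul_spRight hz hx hy
  simp only [summand_eq_det_submatrix_mul_det_submatrix]
  exact ⟨antitoneEquivStrictAnti.summable_iff.2
      (summable_norm_det_submatrix_mul_det_submatrix habs),
    (antitoneEquivStrictAnti.hasSum_iff.2 (hasSum_det_submatrix_mul_det_submatrix hAB habs) :)⟩

/-- determinant-expansion step for Sp(2m). The sum over partitions with
at most `m` parts (antitone functions `Fin m → ℕ`) converges absolutely to `det X`. -/
theorem det_expansion_Sp (m : ℕ) (hm : 1 ≤ m) (z : ℂ) (hz : ‖z‖ < 1)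
    (x y : Fin m → ℂ) (hx : ∀ i, ‖x i‖ = 1) (hy : ∀ i, ‖y i‖ = 1)
    (X : Matrix (Fin m) (Fin m) ℂ)
    (hX : ∀ i j, HasSum
      (fun k : ℕ =>
        z ^ k * (x i ^ ((k : ℤ) + 1) - x i ^ (-((k : ℤ) + 1))) *
          (y j ^ ((k : ℤ) + 1) - y j ^ (-((k : ℤ) + 1))))
      (X i j)) :
    Summable
      (fun l : {l : Fin m → ℕ // Antitone l} =>
        ‖(z ^ (∑ i, l.1 i + m.choose 2) *
            Matrix.det (fun i j : Fin m =>
              y j ^ ((l.1 i : ℤ) + (m : ℤ) - (i : ℕ)) -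
                y j ^ (-((l.1 i : ℤ) + (m : ℤ) - (i : ℕ)))) *
            Matrix.det (fun i j : Fin m =>
              x j ^ ((l.1 i : ℤ) + (m : ℤ) - (i : ℕ)) -
                x j ^ (-((l.1 i : ℤ) + (m : ℤ) - (i : ℕ)))))‖) ∧
    HasSum
      (fun l : {l : Fin m → ℕ // Antitone l} =>
        z ^ (∑ i, l.1 i + m.choose 2) *
          Matrix.det (fun i j : Fin m =>
            y j ^ ((l.1 i : ℤ) + (m : ℤ) - (i : ℕ)) -
              y j ^ (-((l.1 i : ℤ) + (m : ℤ) - (i : ℕ)))) *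
          Matrix.det (fun i j : Fin m =>
            x j ^ ((l.1 i : ℤ) + (m : ℤ) - (i : ℕ)) -
              x j ^ (-((l.1 i : ℤ) + (m : ℤ) - (i : ℕ)))))
      (Matrix.det X) :=
  det_expansion_Sp_general m z hz x y hx hy X hX
end

section
/- Let m ≥ 1 and let u_1,…,u_m be nonzero complex numbers; set x_j = u_j². Then det_{1≤i,j≤m}( u_j^{2(m−i)+1} − u_j^{−(2(m−i)+1)} ) = ∏_{1≤i<j≤m}( (x_i + x_i^{−1}) − (x_j + x_j^{−1}) ) · ∏_{j=1}^m ( u_j − u_j^{−1} ). -/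
/-!
With `t = v ^ 2 + v⁻²`, the quotient `(v ^ (2k+1) - v ^ (-(2k+1))) / (v - v⁻¹)` is a monic
polynomial `W k` of degree `k` in `t`, by the three-term recurrence
`W (k+2) = t * W (k+1) - W k` that both sides satisfy. Pulling `u j - (u j)⁻¹` out of each
column therefore leaves the matrix of these polynomials evaluated at `t j = x j + (x j)⁻¹`, with
rows in decreasing degree. A monic family with `deg W k = k` is a unitriangular transform of the
monomials, so this is the Vandermonde determinant in the `t j`, read backwards.
-/

open Polynomial Finset

/-- Rescaled Chebyshev polynomials of the fourth kind: `chebyshevW R k (2 cos θ) =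
sin ((k + 1/2) θ) / sin (θ / 2)`. -/
noncomputable def chebyshevW (R : Type*) [CommRing R] : ℕ → R[X]
  | 0 => 1
  | 1 => X + 1
  | k + 2 => X * chebyshevW R (k + 1) - chebyshevW R k

section CommRing

variable (R : Type*) [CommRing R] [Nontrivial R]

theorem chebyshevW_monic_and_natDegree :
    ∀ k, (chebyshevW R k).Monic ∧ (chebyshevW R k).natDegree = k
  | 0 => ⟨monic_one, natDegree_one⟩
  | 1 => ⟨monic_X_add_C 1, natDegree_X_add_C 1⟩
  | k + 2 => by
    obtain ⟨hmonic₁, hdeg₁⟩ := chebyshevW_monic_and_natDegree (k + 1)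
    obtain ⟨hmonic₀, hdeg₀⟩ := chebyshevW_monic_and_natDegree k
    have hmonic : (X * chebyshevW R (k + 1)).Monic := monic_X.mul hmonic₁
    have hdeg : (X * chebyshevW R (k + 1)).natDegree = k + 2 := by
      rw [natDegree_X_mul hmonic₁.ne_zero, hdeg₁]
    have hlt : (chebyshevW R k).natDegree < (X * chebyshevW R (k + 1)).natDegree := by
      omega
    rw [chebyshevW]
    exact ⟨hmonic.sub_of_left (degree_lt_degree hlt),
      by rw [natDegree_sub_eq_left_of_natDegree_lt hlt, hdeg]⟩

theorem chebyshevW_monic (k : ℕ) : (chebyshevW R k).Monic :=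
  (chebyshevW_monic_and_natDegree R k).1

theorem chebyshevW_natDegree (k : ℕ) : (chebyshevW R k).natDegree = k :=
  (chebyshevW_monic_and_natDegree R k).2

end CommRing

theorem sub_inv_mul_eval_chebyshevW {K : Type*} [Field K] {v : K} (hv : v ≠ 0) :
    ∀ k, (v - v⁻¹) * (chebyshevW K k).eval (v ^ 2 + (v ^ 2)⁻¹) =
      v ^ (2 * k + 1) - (v ^ (2 * k + 1))⁻¹
  | 0 => by simp [chebyshevW]
  | 1 => by
    simp only [chebyshevW, eval_add, eval_X, eval_one]
    field_simp
    ring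
  | k + 2 => by
    have ih₁ := sub_inv_mul_eval_chebyshevW hv (k + 1)
    have ih₀ := sub_inv_mul_eval_chebyshevW hv k
    simp only [chebyshevW, eval_sub, eval_mul, eval_X]
    rw [mul_sub, mul_left_comm, ih₁, ih₀]
    field_simp
    ring

theorem Fin.prod_prod_Ioi_rev {M : Type*} [CommMonoid M] {n : ℕ} (f : Fin n → Fin n → M) :
    ∏ i : Fin n, ∏ j ∈ Ioi i, f j.rev i.rev = ∏ i : Fin n, ∏ j ∈ Ioi i, f i j := by
  rw [prod_sigma', prod_sigma']
  refine prod_nbij' (fun p : (_ : Fin n) × Fin n => ⟨p.2.rev, p.1.rev⟩)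
    (fun p : (_ : Fin n) × Fin n => ⟨p.2.rev, p.1.rev⟩)
    ?_ ?_ (fun _ _ => by simp) (fun _ _ => by simp) (fun _ _ => by simp) <;>
  · rintro ⟨i, j⟩ hij
    simpa using hij

theorem Matrix.det_eval_matrixOfPolynomials_rev {R : Type*} [CommRing R] {n : ℕ}
    (p : Fin n → R[X]) (h_deg : ∀ i, (p i).natDegree = i) (h_monic : ∀ i, (p i).Monic)
    (t : Fin n → R) :
    (Matrix.of fun i j : Fin n => (p i.rev).eval (t j)).det =
      ∏ i : Fin n, ∏ j ∈ Ioi i, (t i - t j) := by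
  have hrev : (Matrix.of fun i j : Fin n => (p i.rev).eval (t j)) =
      (Matrix.of fun i j : Fin n => (p j).eval (t i.rev)).transpose.submatrix
        Fin.revPerm Fin.revPerm := by
    ext i j
    simp
  rw [hrev, Matrix.det_submatrix_equiv_self, Matrix.det_transpose,
    ← Matrix.det_eval_matrixOfPolynomials_eq_det_vandermonde _ p h_deg h_monic,
    Matrix.det_vandermonde]
  exact Fin.prod_prod_Ioi_rev fun i j => t i - t j

theorem weyl_denominator_SO_odd_general (m : ℕ) (u : Fin m → ℂ)
    (hu : ∀ j, u j ≠ 0) (x : Fin m → ℂ) (hx : ∀ j, x j = u j ^ 2) :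
    Matrix.det (fun i j : Fin m =>
        u j ^ (2 * ((m : ℤ) - 1 - (i : ℕ)) + 1) - u j ^ (-(2 * ((m : ℤ) - 1 - (i : ℕ)) + 1))) =
      (∏ i : Fin m, ∏ j ∈ Finset.Ioi i, ((x i + (x i)⁻¹) - (x j + (x j)⁻¹))) *
        ∏ j : Fin m, (u j - (u j)⁻¹) := by
  have hexp (i : Fin m) :
      2 * ((m : ℤ) - 1 - (i : ℕ)) + 1 = ((2 * (i.rev : ℕ) + 1 : ℕ) : ℤ) := by
    rw [Fin.val_rev]
    push_cast [Nat.cast_sub i.isLt]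
    ring
  calc _ = (Matrix.of fun i j : Fin m => (u j - (u j)⁻¹) *
        (chebyshevW ℂ i.rev).eval (u j ^ 2 + (u j ^ 2)⁻¹)).det := by
        congr 1
        ext i j
        rw [Matrix.of_apply, sub_inv_mul_eval_chebyshevW (hu j), hexp, zpow_neg, zpow_natCast]
    _ = (∏ j, (u j - (u j)⁻¹)) * (Matrix.of fun i j : Fin m =>
        (chebyshevW ℂ i.rev).eval (u j ^ 2 + (u j ^ 2)⁻¹)).det := Matrix.det_mul_row _ _
    _ = _ := by
      rw [Matrix.det_eval_matrixOfPolynomials_rev (fun k => chebyshevW ℂ k)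
        (fun k => chebyshevW_natDegree ℂ k) (fun k => chebyshevW_monic ℂ k), mul_comm]
      simp only [hx]

/-- the Weyl denominator of SO(2m+1) as a Vandermonde-type product. -/
theorem weyl_denominator_SO_odd (m : ℕ) (hm : 1 ≤ m) (u : Fin m → ℂ)
    (hu : ∀ j, u j ≠ 0) (x : Fin m → ℂ) (hx : ∀ j, x j = u j ^ 2) :
    Matrix.det (fun i j : Fin m =>
        u j ^ (2 * ((m : ℤ) - 1 - (i : ℕ)) + 1) - u j ^ (-(2 * ((m : ℤ) - 1 - (i : ℕ)) + 1))) =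
      (∏ i : Fin m, ∏ j ∈ Finset.Ioi i, ((x i + (x i)⁻¹) - (x j + (x j)⁻¹))) *
        ∏ j : Fin m, (u j - (u j)⁻¹) :=
  weyl_denominator_SO_odd_general m u hu x hx
end

section
/- Let m ≥ 1 and let x_1,…,x_m be nonzero complex numbers. Then det_{1≤i,j≤m}( x_j^{m−i+1} − x_j^{−(m−i+1)} ) = ∏_{1≤i<j≤m}( (x_i + x_i^{−1}) − (x_j + x_j^{−1}) ) · ∏_{j=1}^m ( x_j − x_j^{−1} ). -/
/-!
With `t = x + x⁻¹`, the entry `x ^ (k + 1) - x⁻¹ ^ (k + 1)` equals `(x - x⁻¹) * S_k(t)`, where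
`S_k = Polynomial.Chebyshev.S k` is monic of degree `k`. Factoring `x_j - x_j⁻¹` out of column `j`
leaves the matrix `(S_{m-1-i}(t_j))`; row operations reduce each `S_{m-1-i}` to its leading
monomial, and the resulting Vandermonde matrix with decreasing powers has determinant
`∏_{i<j} (t_i - t_j)`.
-/

open Polynomial Finset
open scoped Matrix

namespace Polynomial.Chebyshev

variable (R : Type*) [CommRing R]

theorem degree_S_natCast [Nontrivial R] (n : ℕ) : (S R n).degree = n := by
  induction n using Nat.twoStepInduction with
  | zero => simp
  | one => simp
  | more n ih₀ ih₁ =>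
    push_cast at ih₁ ⊢
    have hX : (X * S R (n + 1)).degree = ((n + 2 : ℕ) : WithBot ℕ) := by
      rw [mul_comm, degree_mul_X, ih₁]; norm_cast
    rw [S_add_two, degree_sub_eq_left_of_degree_lt (by rw [ih₀, hX]; norm_cast; omega), hX]
    norm_cast

theorem natDegree_S_natCast [Nontrivial R] (n : ℕ) : (S R n).natDegree = n :=
  natDegree_eq_of_degree_eq_some (degree_S_natCast R n)

theorem monic_S_natCast (n : ℕ) : (S R n).Monic := by
  nontriviality R
  induction n using Nat.twoStepInduction with
  | zero => simp
  | one => simp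
  | more n ih₀ ih₁ =>
    push_cast at ih₁ ⊢
    have hdeg := degree_S_natCast R (n + 1)
    push_cast at hdeg
    rw [S_add_two]
    refine (monic_X.mul ih₁).sub_of_left ?_
    rw [degree_S_natCast, mul_comm, degree_mul_X, hdeg]
    norm_cast; omega

theorem sub_mul_S_eval_add_inv (x y : R) (h : x * y = 1) (n : ℕ) :
    (x - y) * (S R n).eval (x + y) = x ^ (n + 1) - y ^ (n + 1) := by
  induction n using Nat.twoStepInduction with
  | zero => simp
  | one => simp only [Nat.cast_one, S_one, eval_X]; ring
  | more n ih₀ ih₁ =>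
    push_cast at ih₁ ⊢
    rw [S_add_two, eval_sub, eval_mul, eval_X]
    linear_combination (x + y) * ih₁ - ih₀ + (x ^ (n + 1) - y ^ (n + 1)) * h

end Polynomial.Chebyshev

namespace Matrix

variable {R : Type*} [CommRing R] {n : ℕ}

theorem det_projVandermonde_one_left (v : Fin n → R) :
    (projVandermonde 1 v).det = ∏ i : Fin n, ∏ j ∈ Ioi i, (v i - v j) := by
  simp [det_projVandermonde]

theorem det_eval_matrixOfPolynomials_rev_eq_det_projVandermonde (v : Fin n → R)
    (p : Fin n → R[X]) (h_deg : ∀ j, (p j).natDegree = j.rev) (h_monic : ∀ j, (p j).Monic) :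
    (of fun i j => (p j).eval (v i)).det = (projVandermonde 1 v).det := by
  have hM : of (fun i j => (p j).eval (v i)) =
      (of fun i j => (p j.rev).eval (v i)).submatrix id Fin.revPerm := by
    ext; simp
  have hP : projVandermonde 1 v = (vandermonde v).submatrix id Fin.revPerm := by
    ext; simp [projVandermonde_apply]
  rw [hM, hP, det_permute', det_permute',
    det_eval_matrixOfPolynomials_eq_det_vandermonde v (fun j => p j.rev) (by simp [h_deg])
      (fun j => h_monic _)]

end Matrix

theorem weyl_denominator_Sp_general (m : ℕ) (x : Fin m → ℂ) (hx : ∀ j, x j ≠ 0) :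
    Matrix.det (fun i j : Fin m =>
        x j ^ ((m : ℤ) - (i : ℕ)) - x j ^ (-((m : ℤ) - (i : ℕ)))) =
      (∏ i : Fin m, ∏ j ∈ Finset.Ioi i, ((x i + (x i)⁻¹) - (x j + (x j)⁻¹))) *
        ∏ j : Fin m, (x j - (x j)⁻¹) := by
  set t : Fin m → ℂ := fun j => x j + (x j)⁻¹
  have hentry (i j : Fin m) : x j ^ ((m : ℤ) - (i : ℕ)) - x j ^ (-((m : ℤ) - (i : ℕ))) =
      (x j - (x j)⁻¹) * (Chebyshev.S ℂ (i.rev : ℕ)).eval (t j) := by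
    have hexp : (m : ℤ) - (i : ℕ) = ((i.rev + 1 : ℕ) : ℤ) := by rw [Fin.val_rev]; omega
    rw [Chebyshev.sub_mul_S_eval_add_inv _ _ _ (mul_inv_cancel₀ (hx j)), hexp, zpow_neg,
      zpow_natCast, inv_pow]
  let P : Matrix (Fin m) (Fin m) ℂ := .of fun j i => (Chebyshev.S ℂ (i.rev : ℕ)).eval (t j)
  have hP : P.det = ∏ i : Fin m, ∏ j ∈ Ioi i, (t i - t j) := by
    rw [Matrix.det_eval_matrixOfPolynomials_rev_eq_det_projVandermonde t _
      (fun j => Chebyshev.natDegree_S_natCast ℂ _) (fun j => Chebyshev.monic_S_natCast ℂ _),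
      Matrix.det_projVandermonde_one_left]
  calc Matrix.det (fun i j : Fin m => x j ^ ((m : ℤ) - (i : ℕ)) - x j ^ (-((m : ℤ) - (i : ℕ))))
      = (Matrix.of fun i j : Fin m => (x j - (x j)⁻¹) * Pᵀ i j).det :=
        congrArg Matrix.det (funext₂ hentry)
    _ = _ := by rw [Matrix.det_mul_row, Matrix.det_transpose, hP, mul_comm]

/-- the Weyl denominator of Sp(2m) as a Vandermonde-type product. -/
theorem weyl_denominator_Sp (m : ℕ) (hm : 1 ≤ m) (x : Fin m → ℂ) (hx : ∀ j, x j ≠ 0) :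
    Matrix.det (fun i j : Fin m =>
        x j ^ ((m : ℤ) - (i : ℕ)) - x j ^ (-((m : ℤ) - (i : ℕ)))) =
      (∏ i : Fin m, ∏ j ∈ Finset.Ioi i, ((x i + (x i)⁻¹) - (x j + (x j)⁻¹))) *
        ∏ j : Fin m, (x j - (x j)⁻¹) :=
  weyl_denominator_Sp_general m x hx
end
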